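/- Real and imaginary parts of the Simons identity (equation (3.2)): suppose the conformal minimal immersion f : ℂ → S^n satisfies ⟨Ω, Ω⟩ ≡ a for a real constant a, and write Ω = Ω₁ + i Ω₂ with Ω₁, Ω₂ : ℂ → ℝ^{n+1} the componentwise real and imaginary parts. Then at every point: ⟨Ω₁, Ω₂⟩ = 0, |Ω₁|² − |Ω₂|² = a, Δ^⊥ Ω₁ = −8 e^{−4ρ} |Ω₂|² Ω₁, and Δ^⊥ Ω₂ = −8 e^{−4ρ} |Ω₁|² Ω₂. -/

import Mathlib

open Complex

noncomputable section

/-- Wirtinger derivative `∂_z` of a map `ℂ → ℂ`. -/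
def wirtZ (g : ℂ → ℂ) (z : ℂ) : ℂ :=
  (1 / 2 : ℂ) * (fderiv ℝ g z 1 - Complex.I * fderiv ℝ g z Complex.I)

/-- Wirtinger derivative `∂_z̄` of a map `ℂ → ℂ`. -/
def wirtZbar (g : ℂ → ℂ) (z : ℂ) : ℂ :=
  (1 / 2 : ℂ) * (fderiv ℝ g z 1 + Complex.I * fderiv ℝ g z Complex.I)

/-- Componentwise `∂_z` for vector-valued maps. -/
def WZ {m : ℕ} (g : ℂ → Fin m → ℂ) : ℂ → Fin m → ℂ :=
  fun z i => wirtZ (fun w => g w i) z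

/-- Componentwise `∂_z̄` for vector-valued maps. -/
def WZb {m : ℕ} (g : ℂ → Fin m → ℂ) : ℂ → Fin m → ℂ :=
  fun z i => wirtZbar (fun w => g w i) z

/-- Complex-bilinear (non-conjugating) pairing. -/
def pairC {m : ℕ} (u v : Fin m → ℂ) : ℂ := ∑ i, u i * v i

/-- Componentwise complex conjugation. -/
def conjV {m : ℕ} (u : Fin m → ℂ) : Fin m → ℂ := fun i => (starRingEnd ℂ) (u i)

/-- Complexification of a real vector. -/
def cV {m : ℕ} (u : Fin m → ℝ) : Fin m → ℂ := fun i => (u i : ℂ)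

/-- Complexification of a real-vector-valued map. -/
def Fc {m : ℕ} (f : ℂ → Fin m → ℝ) : ℂ → Fin m → ℂ := fun z => cV (f z)

/-- `∂_z` of (the complexification of) a real-valued function. -/
def dZ (ρ : ℂ → ℝ) (z : ℂ) : ℂ := wirtZ (fun w => ((ρ w : ℝ) : ℂ)) z

/-- `f : ℂ → S^n ⊂ ℝ^{n+1}` is a conformal minimal immersion with conformal factor `ρ`:
`⟨f_z, f_z⟩ = 0`, `⟨f_z, f̄_z⟩ = (1/2) e^{2ρ}`, and `f_{z z̄} = −(1/2) e^{2ρ} f`. -/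
def IsConfMinImm {m : ℕ} (f : ℂ → Fin m → ℝ) (ρ : ℂ → ℝ) : Prop :=
  ContDiff ℝ (⊤ : ℕ∞) f ∧ ContDiff ℝ (⊤ : ℕ∞) ρ ∧
  (∀ z, ∑ i, (f z i) ^ 2 = 1) ∧
  (∀ z, pairC (WZ (Fc f) z) (WZ (Fc f) z) = 0) ∧
  (∀ z, pairC (WZ (Fc f) z) (conjV (WZ (Fc f) z)) = (1 / 2 : ℂ) * (Real.exp (2 * ρ z) : ℂ)) ∧
  (∀ z i, WZb (WZ (Fc f)) z i = -(1 / 2 : ℂ) * (Real.exp (2 * ρ z) : ℂ) * Fc f z i)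

/-- The Hopf field `Ω = f_{zz} − 2 ρ_z f_z`. -/
def Hopf {m : ℕ} (f : ℂ → Fin m → ℝ) (ρ : ℂ → ℝ) : ℂ → Fin m → ℂ :=
  fun z i => WZ (WZ (Fc f)) z i - 2 * dZ ρ z * WZ (Fc f) z i

/-- Real part `Ω₁` of the Hopf field, viewed in `ℂ^{n+1}`. -/
def HopfRe {m : ℕ} (f : ℂ → Fin m → ℝ) (ρ : ℂ → ℝ) : ℂ → Fin m → ℂ :=
  fun z i => ((Hopf f ρ z i).re : ℂ)

/-- Imaginary part `Ω₂` of the Hopf field, viewed in `ℂ^{n+1}`. -/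
def HopfIm {m : ℕ} (f : ℂ → Fin m → ℝ) (ρ : ℂ → ℝ) : ℂ → Fin m → ℂ :=
  fun z i => ((Hopf f ρ z i).im : ℂ)

/-- Normal projection `E^⊥` of a constant vector `E ∈ ℝ^{n+1}`. -/
def Eperp {m : ℕ} (f : ℂ → Fin m → ℝ) (ρ : ℂ → ℝ) (E : Fin m → ℝ) : ℂ → Fin m → ℂ :=
  fun z i => (E i : ℂ) - pairC (cV E) (Fc f z) * Fc f z i
    - 2 * (Real.exp (-2 * ρ z) : ℂ) * pairC (cV E) (WZ (Fc f) z) * WZb (Fc f) z i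
    - 2 * (Real.exp (-2 * ρ z) : ℂ) * pairC (cV E) (WZb (Fc f) z) * WZ (Fc f) z i

/-- `ψ` is a normal field along `f`. -/
def IsNormalField {m : ℕ} (f : ℂ → Fin m → ℝ) (ψ : ℂ → Fin m → ℂ) : Prop :=
  ∀ z, pairC (ψ z) (Fc f z) = 0 ∧ pairC (ψ z) (WZ (Fc f) z) = 0 ∧
    pairC (ψ z) (WZb (Fc f) z) = 0

/-- Normal covariant derivative `N_z ψ = ψ_z + 2 e^{−2ρ} ⟨ψ, Ω⟩ f_z̄`. -/
def NZ {m : ℕ} (f : ℂ → Fin m → ℝ) (ρ : ℂ → ℝ) (ψ : ℂ → Fin m → ℂ) : ℂ → Fin m → ℂ :=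
  fun z i => WZ ψ z i
    + 2 * (Real.exp (-2 * ρ z) : ℂ) * pairC (ψ z) (Hopf f ρ z) * WZb (Fc f) z i

/-- Normal covariant derivative `N_z̄ ψ = ψ_z̄ + 2 e^{−2ρ} ⟨ψ, Ω̄⟩ f_z`. -/
def NZb {m : ℕ} (f : ℂ → Fin m → ℝ) (ρ : ℂ → ℝ) (ψ : ℂ → Fin m → ℂ) : ℂ → Fin m → ℂ :=
  fun z i => WZb ψ z i
    + 2 * (Real.exp (-2 * ρ z) : ℂ) * pairC (ψ z) (conjV (Hopf f ρ z)) * WZ (Fc f) z i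

/-- Normal Laplacian `Δ^⊥ ψ = 2 e^{−2ρ} (N_z̄ (N_z ψ) + N_z (N_z̄ ψ))`. -/
def LapPerp {m : ℕ} (f : ℂ → Fin m → ℝ) (ρ : ℂ → ℝ) (ψ : ℂ → Fin m → ℂ) : ℂ → Fin m → ℂ :=
  fun z i => 2 * (Real.exp (-2 * ρ z) : ℂ) * (NZb f ρ (NZ f ρ ψ) z i + NZ f ρ (NZb f ρ ψ) z i)

/-- Jacobi operator `𝓛 ψ = Δ^⊥ ψ + 2 ψ + 4 e^{−4ρ} (⟨ψ, Ω⟩ Ω̄ + ⟨ψ, Ω̄⟩ Ω)`. -/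
def Jacobi {m : ℕ} (f : ℂ → Fin m → ℝ) (ρ : ℂ → ℝ) (ψ : ℂ → Fin m → ℂ) : ℂ → Fin m → ℂ :=
  fun z i => LapPerp f ρ ψ z i + 2 * ψ z i
    + 4 * (Real.exp (-4 * ρ z) : ℂ) *
      (pairC (ψ z) (Hopf f ρ z) * conjV (Hopf f ρ z) i
        + pairC (ψ z) (conjV (Hopf f ρ z)) * Hopf f ρ z i)

/-- The S⁴ adapted frame setup: `⟨Ω, Ω⟩ ≡ 1`, `Ω₁ = cosh θ · ψ₃`, `Ω₂ = sinh θ · ψ₄`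
with `ψ₃, ψ₄` orthonormal normal fields. -/
def S4Frame (f : ℂ → Fin 5 → ℝ) (ρ : ℂ → ℝ) (ψ₃ ψ₄ : ℂ → Fin 5 → ℝ) (θ : ℂ → ℝ) : Prop :=
  ContDiff ℝ (⊤ : ℕ∞) ψ₃ ∧ ContDiff ℝ (⊤ : ℕ∞) ψ₄ ∧ ContDiff ℝ (⊤ : ℕ∞) θ ∧
  IsNormalField f (Fc ψ₃) ∧ IsNormalField f (Fc ψ₄) ∧
  (∀ z, ∑ i, (ψ₃ z i) ^ 2 = 1) ∧ (∀ z, ∑ i, (ψ₄ z i) ^ 2 = 1) ∧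
  (∀ z, ∑ i, ψ₃ z i * ψ₄ z i = 0) ∧
  (∀ z, pairC (Hopf f ρ z) (Hopf f ρ z) = 1) ∧
  (∀ z i, (Hopf f ρ z i).re = Real.cosh (θ z) * ψ₃ z i) ∧
  (∀ z i, (Hopf f ρ z i).im = Real.sinh (θ z) * ψ₄ z i)

lemma wirtZ_add {g h : ℂ → ℂ} {z : ℂ} (hg : DifferentiableAt ℝ g z)
    (hh : DifferentiableAt ℝ h z) :
    wirtZ (fun w => g w + h w) z = wirtZ g z + wirtZ h z := by
  simp only [wirtZ, fderiv_fun_add hg hh, ContinuousLinearMap.add_apply]; ring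

lemma wirtZbar_add {g h : ℂ → ℂ} {z : ℂ} (hg : DifferentiableAt ℝ g z)
    (hh : DifferentiableAt ℝ h z) :
    wirtZbar (fun w => g w + h w) z = wirtZbar g z + wirtZbar h z := by
  simp only [wirtZbar, fderiv_fun_add hg hh, ContinuousLinearMap.add_apply]; ring

lemma wirtZ_sub {g h : ℂ → ℂ} {z : ℂ} (hg : DifferentiableAt ℝ g z)
    (hh : DifferentiableAt ℝ h z) :
    wirtZ (fun w => g w - h w) z = wirtZ g z - wirtZ h z := by
  simp only [wirtZ, fderiv_fun_sub hg hh, ContinuousLinearMap.sub_apply]; ring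

lemma wirtZbar_sub {g h : ℂ → ℂ} {z : ℂ} (hg : DifferentiableAt ℝ g z)
    (hh : DifferentiableAt ℝ h z) :
    wirtZbar (fun w => g w - h w) z = wirtZbar g z - wirtZbar h z := by
  simp only [wirtZbar, fderiv_fun_sub hg hh, ContinuousLinearMap.sub_apply]; ring

lemma wirtZ_mul {g h : ℂ → ℂ} {z : ℂ} (hg : DifferentiableAt ℝ g z)
    (hh : DifferentiableAt ℝ h z) :
    wirtZ (fun w => g w * h w) z = g z * wirtZ h z + h z * wirtZ g z := by
  simp only [wirtZ, fderiv_fun_mul hg hh, ContinuousLinearMap.add_apply,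
    ContinuousLinearMap.smul_apply, smul_eq_mul]; ring

lemma wirtZbar_mul {g h : ℂ → ℂ} {z : ℂ} (hg : DifferentiableAt ℝ g z)
    (hh : DifferentiableAt ℝ h z) :
    wirtZbar (fun w => g w * h w) z = g z * wirtZbar h z + h z * wirtZbar g z := by
  simp only [wirtZbar, fderiv_fun_mul hg hh, ContinuousLinearMap.add_apply,
    ContinuousLinearMap.smul_apply, smul_eq_mul]; ring

lemma wirtZ_const (c : ℂ) (z : ℂ) : wirtZ (fun _ => c) z = 0 := by
  simp [wirtZ]

lemma wirtZbar_const (c : ℂ) (z : ℂ) : wirtZbar (fun _ => c) z = 0 := by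
  simp [wirtZbar]

lemma wirtZ_const_mul {g : ℂ → ℂ} {z : ℂ} (hg : DifferentiableAt ℝ g z) (c : ℂ) :
    wirtZ (fun w => c * g w) z = c * wirtZ g z := by
  rw [wirtZ_mul (differentiableAt_const c) hg]; simp [wirtZ_const]

lemma wirtZbar_const_mul {g : ℂ → ℂ} {z : ℂ} (hg : DifferentiableAt ℝ g z) (c : ℂ) :
    wirtZbar (fun w => c * g w) z = c * wirtZbar g z := by
  rw [wirtZbar_mul (differentiableAt_const c) hg]; simp [wirtZbar_const]

lemma wirtZ_sum {ι : Type*} {s : Finset ι} {g : ι → ℂ → ℂ} {z : ℂ}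
    (hg : ∀ i ∈ s, DifferentiableAt ℝ (g i) z) :
    wirtZ (fun w => ∑ i ∈ s, g i w) z = ∑ i ∈ s, wirtZ (g i) z := by
  simp only [wirtZ, fderiv_fun_sum hg, ContinuousLinearMap.sum_apply, Finset.mul_sum,
    Finset.sum_sub_distrib, ← Finset.mul_sum]

lemma wirtZbar_sum {ι : Type*} {s : Finset ι} {g : ι → ℂ → ℂ} {z : ℂ}
    (hg : ∀ i ∈ s, DifferentiableAt ℝ (g i) z) :
    wirtZbar (fun w => ∑ i ∈ s, g i w) z = ∑ i ∈ s, wirtZbar (g i) z := by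
  simp only [wirtZbar, fderiv_fun_sum hg, ContinuousLinearMap.sum_apply, Finset.sum_add_distrib,
    ← Finset.mul_sum]

lemma fderiv_conj_comp (g : ℂ → ℂ) (z : ℂ) (v : ℂ) :
    fderiv ℝ (fun w => (starRingEnd ℂ) (g w)) z v = (starRingEnd ℂ) (fderiv ℝ g z v) := by
  have h : (fun w => (starRingEnd ℂ) (g w)) = (Complex.conjCLE : ℂ ≃L[ℝ] ℂ) ∘ g := rfl
  rw [h, ContinuousLinearEquiv.comp_fderiv]
  rfl

lemma wirtZ_conj {g : ℂ → ℂ} {z : ℂ} :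
    wirtZ (fun w => (starRingEnd ℂ) (g w)) z = (starRingEnd ℂ) (wirtZbar g z) := by
  simp only [wirtZ, wirtZbar, fderiv_conj_comp, map_mul, map_add, map_sub, map_div₀,
    map_one, map_ofNat, Complex.conj_I]
  ring

lemma wirtZbar_conj {g : ℂ → ℂ} {z : ℂ} :
    wirtZbar (fun w => (starRingEnd ℂ) (g w)) z = (starRingEnd ℂ) (wirtZ g z) := by
  simp only [wirtZ, wirtZbar, fderiv_conj_comp, map_mul, map_add, map_sub, map_div₀,
    map_one, map_ofNat, Complex.conj_I]
  ring

lemma wirtZbar_real {g : ℂ → ℝ} {z : ℂ} :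
    wirtZbar (fun w => (g w : ℂ)) z = (starRingEnd ℂ) (wirtZ (fun w => (g w : ℂ)) z) := by
  have h : (fun w => ((g w : ℝ) : ℂ)) = fun w => (starRingEnd ℂ) ((g w : ℝ) : ℂ) := by
    funext w; simp
  conv_lhs => rw [h]
  rw [wirtZbar_conj]

lemma contDiff_fderiv_apply {g : ℂ → ℂ} (hg : ContDiff ℝ (⊤ : ℕ∞) g) (v : ℂ) :
    ContDiff ℝ (⊤ : ℕ∞) (fun z => fderiv ℝ g z v) :=
  (hg.fderiv_right (by simp)).clm_apply contDiff_const

lemma contDiff_wirtZ {g : ℂ → ℂ} (hg : ContDiff ℝ (⊤ : ℕ∞) g) : ContDiff ℝ (⊤ : ℕ∞) (wirtZ g) := by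
  have h1 := contDiff_fderiv_apply hg 1
  have hI := contDiff_fderiv_apply hg Complex.I
  exact contDiff_const.mul (h1.sub (contDiff_const.mul hI))

lemma contDiff_wirtZbar {g : ℂ → ℂ} (hg : ContDiff ℝ (⊤ : ℕ∞) g) : ContDiff ℝ (⊤ : ℕ∞) (wirtZbar g) := by
  have h1 := contDiff_fderiv_apply hg 1
  have hI := contDiff_fderiv_apply hg Complex.I
  exact contDiff_const.mul (h1.add (contDiff_const.mul hI))

lemma wirt_comm {g : ℂ → ℂ} (hg : ContDiff ℝ (⊤ : ℕ∞) g) (z : ℂ) :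
    wirtZbar (wirtZ g) z = wirtZ (wirtZbar g) z := by
  have hd : ∀ y, HasFDerivAt g (fderiv ℝ g y) y := fun y =>
    (hg.differentiable (by simp) y).hasFDerivAt
  have hfd : ContDiff ℝ (⊤ : ℕ∞) (fderiv ℝ g) := hg.fderiv_right (by simp)
  have h2 : HasFDerivAt (fderiv ℝ g) (fderiv ℝ (fderiv ℝ g) z) z :=
    (hfd.differentiable (by simp) z).hasFDerivAt
  set H := fderiv ℝ (fderiv ℝ g) z with hH
  have hsymm : ∀ v w : ℂ, H v w = H w v := second_derivative_symmetric hd h2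
  have hev : ∀ v : ℂ, ∀ w : ℂ, fderiv ℝ (fun y => fderiv ℝ g y v) z w = H w v := by
    intro v w
    have : HasFDerivAt (fun y => fderiv ℝ g y v)
        ((ContinuousLinearMap.apply ℝ ℂ v).comp H) z :=
      (ContinuousLinearMap.apply ℝ ℂ v).hasFDerivAt.comp z h2
    rw [this.fderiv]; rfl
  have hA : ∀ v : ℂ, DifferentiableAt ℝ (fun y => fderiv ℝ g y v) z := fun v =>
    ((contDiff_fderiv_apply hg v).differentiable (by simp) z)
  have hD : ∀ v : ℂ, HasFDerivAt (fun y => fderiv ℝ g y v)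
      ((ContinuousLinearMap.apply ℝ ℂ v).comp H) z := fun v =>
    (ContinuousLinearMap.apply ℝ ℂ v).hasFDerivAt.comp z h2
  have hz : HasFDerivAt (wirtZ g)
      ((1/2 : ℂ) • (((ContinuousLinearMap.apply ℝ ℂ 1).comp H)
        - Complex.I • ((ContinuousLinearMap.apply ℝ ℂ Complex.I).comp H))) z :=
    ((hD 1).sub ((hD Complex.I).const_mul Complex.I)).const_mul ((1:ℂ)/2)
  have hzb : HasFDerivAt (wirtZbar g)
      ((1/2 : ℂ) • (((ContinuousLinearMap.apply ℝ ℂ 1).comp H)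
        + Complex.I • ((ContinuousLinearMap.apply ℝ ℂ Complex.I).comp H))) z :=
    ((hD 1).add ((hD Complex.I).const_mul Complex.I)).const_mul ((1:ℂ)/2)
  rw [show wirtZbar (wirtZ g) z = (1/2 : ℂ) * (fderiv ℝ (wirtZ g) z 1
      + Complex.I * fderiv ℝ (wirtZ g) z Complex.I) from rfl,
    show wirtZ (wirtZbar g) z = (1/2 : ℂ) * (fderiv ℝ (wirtZbar g) z 1
      - Complex.I * fderiv ℝ (wirtZbar g) z Complex.I) from rfl,
    hz.fderiv, hzb.fderiv]
  simp only [ContinuousLinearMap.smul_apply, ContinuousLinearMap.sub_apply,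
    ContinuousLinearMap.add_apply, ContinuousLinearMap.comp_apply,
    ContinuousLinearMap.apply_apply, smul_eq_mul]
  rw [hsymm Complex.I 1]
  ring

lemma fderiv_ofReal_comp {h : ℂ → ℝ} {z v : ℂ} (hh : DifferentiableAt ℝ h z) :
    fderiv ℝ (fun w => ((h w : ℝ) : ℂ)) z v = ((fderiv ℝ h z v : ℝ) : ℂ) := by
  have h2 : HasFDerivAt (fun w => ((h w : ℝ) : ℂ))
      (Complex.ofRealCLM.comp (fderiv ℝ h z)) z :=
    Complex.ofRealCLM.hasFDerivAt.comp z hh.hasFDerivAt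
  rw [h2.fderiv]; rfl

lemma fderiv_exp_ofReal {h : ℂ → ℝ} {z v : ℂ} (hh : DifferentiableAt ℝ h z) :
    fderiv ℝ (fun w => ((Real.exp (h w) : ℝ) : ℂ)) z v
      = (Real.exp (h z) : ℂ) * ((fderiv ℝ h z v : ℝ) : ℂ) := by
  have h1 : HasFDerivAt (fun w => Real.exp (h w)) (Real.exp (h z) • fderiv ℝ h z) z :=
    (Real.hasDerivAt_exp (h z)).comp_hasFDerivAt z hh.hasFDerivAt
  have h2 : HasFDerivAt (fun w => ((Real.exp (h w) : ℝ) : ℂ))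
      (Complex.ofRealCLM.comp (Real.exp (h z) • fderiv ℝ h z)) z :=
    Complex.ofRealCLM.hasFDerivAt.comp z h1
  rw [h2.fderiv]
  simp [smul_eq_mul]

lemma wirtZ_exp {h : ℂ → ℝ} {z : ℂ} (hh : DifferentiableAt ℝ h z) :
    wirtZ (fun w => ((Real.exp (h w) : ℝ) : ℂ)) z
      = (Real.exp (h z) : ℂ) * wirtZ (fun w => ((h w : ℝ) : ℂ)) z := by
  simp only [wirtZ, fderiv_exp_ofReal hh, fderiv_ofReal_comp hh]; ring

-- pairC algebra
lemma pairC_comm {m : ℕ} (u v : Fin m → ℂ) : pairC u v = pairC v u := by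
  simp [pairC, mul_comm]

lemma pairC_conj {m : ℕ} (u v : Fin m → ℂ) :
    pairC (conjV u) (conjV v) = (starRingEnd ℂ) (pairC u v) := by
  simp [pairC, conjV, map_sum]

lemma wirtZ_pairC {m : ℕ} {g h : ℂ → Fin m → ℂ} {z : ℂ}
    (hg : ∀ i, DifferentiableAt ℝ (fun w => g w i) z)
    (hh : ∀ i, DifferentiableAt ℝ (fun w => h w i) z) :
    wirtZ (fun w => pairC (g w) (h w)) z = pairC (WZ g z) (h z) + pairC (g z) (WZ h z) := by
  unfold pairC
  rw [wirtZ_sum (g := fun i w => g w i * h w i) (fun i _ => (hg i).mul (hh i)), ← Finset.sum_add_distrib]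
  refine Finset.sum_congr rfl fun i _ => ?_
  rw [wirtZ_mul (hg i) (hh i)]
  simp only [WZ]; ring

lemma wirtZbar_pairC {m : ℕ} {g h : ℂ → Fin m → ℂ} {z : ℂ}
    (hg : ∀ i, DifferentiableAt ℝ (fun w => g w i) z)
    (hh : ∀ i, DifferentiableAt ℝ (fun w => h w i) z) :
    wirtZbar (fun w => pairC (g w) (h w)) z = pairC (WZb g z) (h z) + pairC (g z) (WZb h z) := by
  unfold pairC
  rw [wirtZbar_sum (g := fun i w => g w i * h w i) (fun i _ => (hg i).mul (hh i)), ← Finset.sum_add_distrib]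
  refine Finset.sum_congr rfl fun i _ => ?_
  rw [wirtZbar_mul (hg i) (hh i)]
  simp only [WZb]; ring

section Main
variable {m : ℕ} {f : ℂ → Fin m → ℝ} {ρ : ℂ → ℝ}

lemma cd_F (hf : IsConfMinImm f ρ) (i : Fin m) : ContDiff ℝ (⊤ : ℕ∞) (fun z => Fc f z i) :=
  Complex.ofRealCLM.contDiff.comp ((contDiff_pi.mp hf.1) i)

lemma cd_u (hf : IsConfMinImm f ρ) (i : Fin m) : ContDiff ℝ (⊤ : ℕ∞) (fun z => WZ (Fc f) z i) :=
  contDiff_wirtZ (cd_F hf i)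

lemma cd_uu (hf : IsConfMinImm f ρ) (i : Fin m) :
    ContDiff ℝ (⊤ : ℕ∞) (fun z => WZ (WZ (Fc f)) z i) :=
  contDiff_wirtZ (cd_u hf i)

lemma cd_v (hf : IsConfMinImm f ρ) (i : Fin m) : ContDiff ℝ (⊤ : ℕ∞) (fun z => WZb (Fc f) z i) :=
  contDiff_wirtZbar (cd_F hf i)

lemma cd_rhoC (hf : IsConfMinImm f ρ) : ContDiff ℝ (⊤ : ℕ∞) (fun z => ((ρ z : ℝ) : ℂ)) :=
  Complex.ofRealCLM.contDiff.comp hf.2.1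

lemma cd_dZ (hf : IsConfMinImm f ρ) : ContDiff ℝ (⊤ : ℕ∞) (dZ ρ) :=
  contDiff_wirtZ (cd_rhoC hf)

lemma cd_Hopf (hf : IsConfMinImm f ρ) (i : Fin m) :
    ContDiff ℝ (⊤ : ℕ∞) (fun z => Hopf f ρ z i) :=
  (cd_uu hf i).sub ((contDiff_const.mul (cd_dZ hf)).mul (cd_u hf i))

lemma cd_E (hf : IsConfMinImm f ρ) : ContDiff ℝ (⊤ : ℕ∞) (fun z => ((Real.exp (2 * ρ z) : ℝ) : ℂ)) :=
  Complex.ofRealCLM.contDiff.comp (Real.contDiff_exp.comp (contDiff_const.mul hf.2.1))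

lemma cd_G (hf : IsConfMinImm f ρ) : ContDiff ℝ (⊤ : ℕ∞) (fun z => ((Real.exp (-2 * ρ z) : ℝ) : ℂ)) :=
  Complex.ofRealCLM.contDiff.comp (Real.contDiff_exp.comp (contDiff_const.mul hf.2.1))

lemma hC1 (hf : IsConfMinImm f ρ) : ∀ z, pairC (WZ (Fc f) z) (WZ (Fc f) z) = 0 :=
  hf.2.2.2.1

lemma hC2 (hf : IsConfMinImm f ρ) :
    ∀ z, pairC (WZ (Fc f) z) (conjV (WZ (Fc f) z))
      = (1 / 2 : ℂ) * ((Real.exp (2 * ρ z) : ℝ) : ℂ) :=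
  hf.2.2.2.2.1

lemma hC3 (hf : IsConfMinImm f ρ) :
    ∀ z i, WZb (WZ (Fc f)) z i
      = -(1 / 2 : ℂ) * ((Real.exp (2 * ρ z) : ℝ) : ℂ) * Fc f z i :=
  hf.2.2.2.2.2

-- v = conj u
lemma hvu (z : ℂ) (i : Fin m) : WZb (Fc f) z i = (starRingEnd ℂ) (WZ (Fc f) z i) := by
  simp only [WZ, WZb, Fc, cV]
  exact wirtZbar_real

lemma conj_dZ (z : ℂ) : (starRingEnd ℂ) (dZ ρ z) = wirtZbar (fun w => ((ρ w : ℝ) : ℂ)) z := by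
  rw [wirtZbar_real]; simp [dZ]

-- derivative of E
lemma wirtZ_E (hf : IsConfMinImm f ρ) (z : ℂ) :
    wirtZ (fun w => ((Real.exp (2 * ρ w) : ℝ) : ℂ)) z
      = 2 * dZ ρ z * ((Real.exp (2 * ρ z) : ℝ) : ℂ) := by
  have hd : DifferentiableAt ℝ (fun w => 2 * ρ w) z :=
    ((contDiff_const.mul hf.2.1).differentiable (by simp) z)
  rw [wirtZ_exp hd]
  have : wirtZ (fun w => (((2 * ρ w : ℝ)) : ℂ)) z = 2 * dZ ρ z := by
    have h2 : (fun w => (((2 * ρ w : ℝ)) : ℂ)) = fun w => (2 : ℂ) * ((ρ w : ℝ) : ℂ) := by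
      funext w; push_cast; ring
    rw [h2, wirtZ_const_mul ((cd_rhoC hf).differentiable (by simp) z)]
    rfl
  rw [this]; ring

lemma wirtZ_G (hf : IsConfMinImm f ρ) (z : ℂ) :
    wirtZ (fun w => ((Real.exp (-2 * ρ w) : ℝ) : ℂ)) z
      = -2 * dZ ρ z * ((Real.exp (-2 * ρ z) : ℝ) : ℂ) := by
  have hd : DifferentiableAt ℝ (fun w => -2 * ρ w) z :=
    ((contDiff_const.mul hf.2.1).differentiable (by simp) z)
  rw [wirtZ_exp hd]
  have : wirtZ (fun w => (((-2 * ρ w : ℝ)) : ℂ)) z = -2 * dZ ρ z := by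
    have h2 : (fun w => (((-2 * ρ w : ℝ)) : ℂ)) = fun w => (-2 : ℂ) * ((ρ w : ℝ) : ℂ) := by
      funext w; push_cast; ring
    rw [h2, wirtZ_const_mul ((cd_rhoC hf).differentiable (by simp) z)]
    rfl
  rw [this]; ring

lemma wirtZbar_E (hf : IsConfMinImm f ρ) (z : ℂ) :
    wirtZbar (fun w => ((Real.exp (2 * ρ w) : ℝ) : ℂ)) z
      = 2 * (starRingEnd ℂ) (dZ ρ z) * ((Real.exp (2 * ρ z) : ℝ) : ℂ) := by
  rw [wirtZbar_real, wirtZ_E hf]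
  simp only [map_mul, map_neg, map_ofNat, Complex.conj_ofReal]

lemma wirtZbar_G (hf : IsConfMinImm f ρ) (z : ℂ) :
    wirtZbar (fun w => ((Real.exp (-2 * ρ w) : ℝ) : ℂ)) z
      = -2 * (starRingEnd ℂ) (dZ ρ z) * ((Real.exp (-2 * ρ z) : ℝ) : ℂ) := by
  rw [wirtZbar_real, wirtZ_G hf]
  simp only [map_mul, map_neg, map_ofNat, Complex.conj_ofReal]


lemma pairC_Hopf_left {z : ℂ} (k : Fin m → ℂ) :
    pairC (Hopf f ρ z) k
      = pairC (WZ (WZ (Fc f)) z) k - 2 * dZ ρ z * pairC (WZ (Fc f) z) k := by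
  simp only [pairC, Hopf, sub_mul, Finset.sum_sub_distrib, Finset.mul_sum]
  congr 1
  exact Finset.sum_congr rfl fun i _ => by ring

lemma conjV_F (z : ℂ) : conjV (Fc f z) = Fc f z := by
  funext i; simp [conjV, Fc, cV, Complex.conj_ofReal]

lemma conjV_u (z : ℂ) : conjV (WZ (Fc f) z) = WZb (Fc f) z := by
  funext i; rw [hvu]; rfl

lemma P0 (hf : IsConfMinImm f ρ) (z : ℂ) : pairC (Fc f z) (Fc f z) = 1 := by
  simp only [pairC, Fc, cV, ← Complex.ofReal_mul]
  rw [← Complex.ofReal_sum]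
  norm_cast
  simpa [sq] using hf.2.2.1 z

lemma P1 (hf : IsConfMinImm f ρ) (z : ℂ) : pairC (Fc f z) (WZ (Fc f) z) = 0 := by
  have hFd : ∀ i, DifferentiableAt ℝ (fun w => Fc f w i) z := fun i =>
    (cd_F hf i).differentiable (by simp) z
  have h0 : wirtZ (fun w => pairC (Fc f w) (Fc f w)) z = 0 := by
    rw [show (fun w => pairC (Fc f w) (Fc f w)) = fun _ => (1 : ℂ) from funext (P0 hf)]
    exact wirtZ_const 1 z
  rw [wirtZ_pairC hFd hFd, pairC_comm (WZ (Fc f) z)] at h0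
  have h2 : (2 : ℂ) * pairC (Fc f z) (WZ (Fc f) z) = 0 := by linear_combination h0
  exact (mul_eq_zero.mp h2).resolve_left two_ne_zero

lemma P1' (hf : IsConfMinImm f ρ) (z : ℂ) : pairC (Fc f z) (WZb (Fc f) z) = 0 := by
  rw [← conjV_F (f := f) z, ← conjV_u, pairC_conj, P1 hf, map_zero]

lemma WZ_v (hf : IsConfMinImm f ρ) (z : ℂ) (i : Fin m) :
    WZ (WZb (Fc f)) z i = -(1/2 : ℂ) * ((Real.exp (2 * ρ z) : ℝ) : ℂ) * Fc f z i := by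
  have h : (fun w => WZb (Fc f) w i) = fun w => (starRingEnd ℂ) (WZ (Fc f) w i) :=
    funext fun w => hvu w i
  show wirtZ (fun w => WZb (Fc f) w i) z = _
  rw [h, wirtZ_conj]
  rw [show wirtZbar (fun w => WZ (Fc f) w i) z = WZb (WZ (Fc f)) z i from rfl,
    hC3 hf z i]
  simp only [map_mul, map_neg, Complex.conj_ofReal, map_div₀, map_one, map_ofNat]
  rw [show (starRingEnd ℂ) (Fc f z i) = Fc f z i from by simp [Fc, cV, Complex.conj_ofReal]]

lemma WZb_v (z : ℂ) (i : Fin m) :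
    WZb (WZb (Fc f)) z i = (starRingEnd ℂ) (WZ (WZ (Fc f)) z i) := by
  have h : (fun w => WZb (Fc f) w i) = fun w => (starRingEnd ℂ) (WZ (Fc f) w i) :=
    funext fun w => hvu w i
  show wirtZbar (fun w => WZb (Fc f) w i) z = _
  rw [h, wirtZbar_conj]
  rfl

lemma P_uu_F (hf : IsConfMinImm f ρ) (z : ℂ) : pairC (Fc f z) (WZ (WZ (Fc f)) z) = 0 := by
  have hFd : ∀ i, DifferentiableAt ℝ (fun w => Fc f w i) z := fun i =>
    (cd_F hf i).differentiable (by simp) z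
  have hud : ∀ i, DifferentiableAt ℝ (fun w => WZ (Fc f) w i) z := fun i =>
    (cd_u hf i).differentiable (by simp) z
  have h0 : wirtZ (fun w => pairC (Fc f w) (WZ (Fc f) w)) z = 0 := by
    rw [show (fun w => pairC (Fc f w) (WZ (Fc f) w)) = fun _ => (0 : ℂ) from
      funext (P1 hf)]
    exact wirtZ_const 0 z
  rw [wirtZ_pairC hFd hud] at h0
  rw [show pairC (WZ (Fc f) z) (WZ (Fc f) z) = 0 from hC1 hf z] at h0
  linear_combination h0

lemma P2 (hf : IsConfMinImm f ρ) (z : ℂ) : pairC (Hopf f ρ z) (Fc f z) = 0 := by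
  rw [pairC_Hopf_left, pairC_comm (WZ (WZ (Fc f)) z), P_uu_F hf,
    pairC_comm (WZ (Fc f) z), P1 hf]
  ring

lemma P3 (hf : IsConfMinImm f ρ) (z : ℂ) : pairC (Hopf f ρ z) (WZ (Fc f) z) = 0 := by
  have hud : ∀ i, DifferentiableAt ℝ (fun w => WZ (Fc f) w i) z := fun i =>
    (cd_u hf i).differentiable (by simp) z
  have h0 : wirtZ (fun w => pairC (WZ (Fc f) w) (WZ (Fc f) w)) z = 0 := by
    rw [show (fun w => pairC (WZ (Fc f) w) (WZ (Fc f) w)) = fun _ => (0 : ℂ) from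
      funext (hC1 hf)]
    exact wirtZ_const 0 z
  rw [wirtZ_pairC hud hud, pairC_comm (WZ (WZ (Fc f)) z)] at h0
  have huWu : pairC (WZ (Fc f) z) (WZ (WZ (Fc f)) z) = 0 := by linear_combination h0 / 2
  rw [pairC_Hopf_left, pairC_comm (WZ (WZ (Fc f)) z), huWu, hC1 hf z]
  ring

lemma P_uu_v (hf : IsConfMinImm f ρ) (z : ℂ) :
    pairC (WZ (WZ (Fc f)) z) (WZb (Fc f) z) = dZ ρ z * ((Real.exp (2 * ρ z) : ℝ) : ℂ) := by
  have hud : ∀ i, DifferentiableAt ℝ (fun w => WZ (Fc f) w i) z := fun i =>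
    (cd_u hf i).differentiable (by simp) z
  have hvd : ∀ i, DifferentiableAt ℝ (fun w => WZb (Fc f) w i) z := fun i =>
    (cd_v hf i).differentiable (by simp) z
  have h0 : wirtZ (fun w => pairC (WZ (Fc f) w) (WZb (Fc f) w)) z
      = dZ ρ z * ((Real.exp (2 * ρ z) : ℝ) : ℂ) := by
    rw [show (fun w => pairC (WZ (Fc f) w) (WZb (Fc f) w))
        = fun w => (1/2 : ℂ) * ((Real.exp (2 * ρ w) : ℝ) : ℂ) from funext fun w => by
      rw [← conjV_u]; exact hC2 hf w]
    rw [wirtZ_const_mul ((cd_E hf).differentiable (by simp) z), wirtZ_E hf]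
    ring
  rw [wirtZ_pairC hud hvd] at h0
  have h1 : pairC (WZ (Fc f) z) (WZ (WZb (Fc f)) z) = 0 := by
    have : pairC (WZ (Fc f) z) (WZ (WZb (Fc f)) z)
        = -(1/2 : ℂ) * ((Real.exp (2 * ρ z) : ℝ) : ℂ) * pairC (WZ (Fc f) z) (Fc f z) := by
      simp only [pairC, Finset.mul_sum]
      exact Finset.sum_congr rfl fun i _ => by rw [WZ_v hf]; ring
    rw [this, pairC_comm, P1 hf]; ring
  rw [h1] at h0
  linear_combination h0

lemma P4 (hf : IsConfMinImm f ρ) (z : ℂ) : pairC (Hopf f ρ z) (WZb (Fc f) z) = 0 := by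
  have huv : pairC (WZ (Fc f) z) (WZb (Fc f) z)
      = (1/2 : ℂ) * ((Real.exp (2 * ρ z) : ℝ) : ℂ) := by
    rw [← conjV_u]; exact hC2 hf z
  rw [pairC_Hopf_left, P_uu_v hf, huv]
  ring


def muF (ρ : ℂ → ℝ) : ℂ → ℂ :=
  fun z => (1/2 : ℂ) * ((Real.exp (2 * ρ z) : ℝ) : ℂ) + 2 * wirtZbar (dZ ρ) z

lemma cd_mu (hf : IsConfMinImm f ρ) : ContDiff ℝ (⊤ : ℕ∞) (muF ρ) :=
  (contDiff_const.mul (cd_E hf)).add (contDiff_const.mul (contDiff_wirtZbar (cd_dZ hf)))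

lemma WZb_Hopf (hf : IsConfMinImm f ρ) (z : ℂ) (i : Fin m) :
    WZb (Hopf f ρ) z i = -(muF ρ z) * WZ (Fc f) z i := by
  have htermA : wirtZbar (fun w => WZ (WZ (Fc f)) w i) z
      = wirtZ (fun w => WZb (WZ (Fc f)) w i) z := wirt_comm (cd_u hf i) z
  have he : (fun w => WZb (WZ (Fc f)) w i)
      = fun w => (-(1/2) : ℂ) * (((Real.exp (2 * ρ w) : ℝ) : ℂ) * Fc f w i) :=
    funext fun w => by rw [hC3 hf w i]; ring
  have hstep : wirtZ (fun w => WZb (WZ (Fc f)) w i) z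
      = -(1/2 : ℂ) * (((Real.exp (2 * ρ z) : ℝ) : ℂ) * WZ (Fc f) z i
        + Fc f z i * (2 * dZ ρ z * ((Real.exp (2 * ρ z) : ℝ) : ℂ))) := by
    rw [he, wirtZ_const_mul (((cd_E hf).mul (cd_F hf i)).differentiable (by simp) z),
      wirtZ_mul ((cd_E hf).differentiable (by simp) z) ((cd_F hf i).differentiable (by simp) z),
      wirtZ_E hf]
    rfl
  have htermB : wirtZbar (fun w => 2 * dZ ρ w * WZ (Fc f) w i) z
      = 2 * (dZ ρ z * (-(1/2 : ℂ) * ((Real.exp (2 * ρ z) : ℝ) : ℂ) * Fc f z i)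
        + WZ (Fc f) z i * wirtZbar (dZ ρ) z) := by
    have he2 : (fun w => 2 * dZ ρ w * WZ (Fc f) w i)
        = fun w => (2 : ℂ) * (dZ ρ w * WZ (Fc f) w i) := funext fun w => by ring
    rw [he2, wirtZbar_const_mul (((cd_dZ hf).mul (cd_u hf i)).differentiable (by simp) z),
      wirtZbar_mul ((cd_dZ hf).differentiable (by simp) z) ((cd_u hf i).differentiable (by simp) z)]
    rw [show wirtZbar (fun w => WZ (Fc f) w i) z = WZb (WZ (Fc f)) z i from rfl, hC3 hf z i]
  have hH : (fun w => Hopf f ρ w i)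
      = fun w => WZ (WZ (Fc f)) w i - 2 * dZ ρ w * WZ (Fc f) w i := rfl
  show wirtZbar (fun w => Hopf f ρ w i) z = _
  rw [hH, wirtZbar_sub ((cd_uu hf i).differentiable (by simp) z)
    (((contDiff_const.mul (cd_dZ hf)).mul (cd_u hf i)).differentiable (by simp) z),
    htermA, hstep, htermB]
  simp only [muF]
  ring


lemma Gauss (hf : IsConfMinImm f ρ) (z : ℂ) :
    pairC (Hopf f ρ z) (conjV (Hopf f ρ z))
      = muF ρ z * ((Real.exp (2 * ρ z) : ℝ) : ℂ) / 2 := by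
  have hHd : ∀ i, DifferentiableAt ℝ (fun w => Hopf f ρ w i) z := fun i =>
    (cd_Hopf hf i).differentiable (by simp) z
  have hvd : ∀ i, DifferentiableAt ℝ (fun w => WZb (Fc f) w i) z := fun i =>
    (cd_v hf i).differentiable (by simp) z
  have h0 : wirtZbar (fun w => pairC (Hopf f ρ w) (WZb (Fc f) w)) z = 0 := by
    rw [show (fun w => pairC (Hopf f ρ w) (WZb (Fc f) w)) = fun _ => (0 : ℂ) from
      funext (P4 hf)]
    exact wirtZbar_const 0 z
  rw [wirtZbar_pairC hHd hvd] at h0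
  have hA : pairC (WZb (Hopf f ρ) z) (WZb (Fc f) z)
      = -(muF ρ z) * ((1/2 : ℂ) * ((Real.exp (2 * ρ z) : ℝ) : ℂ)) := by
    have : pairC (WZb (Hopf f ρ) z) (WZb (Fc f) z)
        = -(muF ρ z) * pairC (WZ (Fc f) z) (WZb (Fc f) z) := by
      simp only [pairC, Finset.mul_sum]
      exact Finset.sum_congr rfl fun i _ => by rw [WZb_Hopf hf]; ring
    rw [this, ← conjV_u, hC2 hf z]
  have hB : pairC (Hopf f ρ z) (WZb (WZb (Fc f)) z)
      = pairC (Hopf f ρ z) (conjV (Hopf f ρ z))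
        + 2 * (starRingEnd ℂ) (dZ ρ z) * pairC (Hopf f ρ z) (WZb (Fc f) z) := by
    simp only [pairC, conjV, Finset.mul_sum, ← Finset.sum_add_distrib]
    refine Finset.sum_congr rfl fun i _ => ?_
    rw [WZb_v, show WZ (WZ (Fc f)) z i = Hopf f ρ z i + 2 * dZ ρ z * WZ (Fc f) z i from by
      simp only [Hopf]; ring]
    rw [map_add, map_mul, map_mul, map_ofNat, ← hvu]
    ring
  rw [hA, hB, P4 hf] at h0
  linear_combination h0

lemma NZb_Hopf_zero (hf : IsConfMinImm f ρ) (z : ℂ) (i : Fin m) :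
    NZb f ρ (Hopf f ρ) z i = 0 := by
  have hGE : ((Real.exp (-2 * ρ z) : ℝ) : ℂ) * ((Real.exp (2 * ρ z) : ℝ) : ℂ) = 1 := by
    rw [← Complex.ofReal_mul, ← Real.exp_add]; norm_num
  simp only [NZb]
  rw [WZb_Hopf hf, Gauss hf]
  linear_combination (muF ρ z * WZ (Fc f) z i) * hGE


lemma wirtZ_neg {g : ℂ → ℂ} {z : ℂ} : wirtZ (fun w => -(g w)) z = -(wirtZ g z) := by
  simp only [wirtZ, fderiv_fun_neg, ContinuousLinearMap.neg_apply]; ring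

lemma wirtZbar_neg {g : ℂ → ℂ} {z : ℂ} : wirtZbar (fun w => -(g w)) z = -(wirtZbar g z) := by
  simp only [wirtZbar, fderiv_fun_neg, ContinuousLinearMap.neg_apply]; ring

lemma cd_conj {g : ℂ → ℂ} (hg : ContDiff ℝ (⊤ : ℕ∞) g) :
    ContDiff ℝ (⊤ : ℕ∞) (fun w => (starRingEnd ℂ) (g w)) :=
  (Complex.conjCLE : ℂ ≃L[ℝ] ℂ).contDiff.comp hg

lemma cd_pairC {ψ φ : ℂ → Fin m → ℂ} (hψ : ∀ i, ContDiff ℝ (⊤ : ℕ∞) (fun w => ψ w i))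
    (hφ : ∀ i, ContDiff ℝ (⊤ : ℕ∞) (fun w => φ w i)) :
    ContDiff ℝ (⊤ : ℕ∞) (fun w => pairC (ψ w) (φ w)) := by
  simp only [pairC]
  exact ContDiff.sum fun i _ => (hψ i).mul (hφ i)

lemma cd_NZ (hf : IsConfMinImm f ρ) {ψ : ℂ → Fin m → ℂ}
    (hψ : ∀ i, ContDiff ℝ (⊤ : ℕ∞) (fun w => ψ w i)) (i : Fin m) :
    ContDiff ℝ (⊤ : ℕ∞) (fun w => NZ f ρ ψ w i) := by
  simp only [NZ]
  exact (contDiff_wirtZ (hψ i)).add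
    (((contDiff_const.mul (cd_G hf)).mul (cd_pairC hψ (cd_Hopf hf))).mul (cd_v hf i))

lemma cd_NZb (hf : IsConfMinImm f ρ) {ψ : ℂ → Fin m → ℂ}
    (hψ : ∀ i, ContDiff ℝ (⊤ : ℕ∞) (fun w => ψ w i)) (i : Fin m) :
    ContDiff ℝ (⊤ : ℕ∞) (fun w => NZb f ρ ψ w i) := by
  simp only [NZb]
  exact (contDiff_wirtZbar (hψ i)).add
    (((contDiff_const.mul (cd_G hf)).mul
      (cd_pairC hψ (fun j => cd_conj (cd_Hopf hf j)))).mul (cd_u hf i))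

lemma NZb_NZ_Hopf (hf : IsConfMinImm f ρ) (a : ℝ)
    (ha : ∀ z, pairC (Hopf f ρ z) (Hopf f ρ z) = (a : ℂ)) (z : ℂ) (i : Fin m) :
    NZb f ρ (NZ f ρ (Hopf f ρ)) z i
      = -(muF ρ z) * Hopf f ρ z i
        + 2 * (a : ℂ) * ((Real.exp (-2 * ρ z) : ℝ) : ℂ) * (starRingEnd ℂ) (Hopf f ρ z i) := by
  have hGE : ((Real.exp (-2 * ρ z) : ℝ) : ℂ) * ((Real.exp (2 * ρ z) : ℝ) : ℂ) = 1 := by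
    rw [← Complex.ofReal_mul, ← Real.exp_add]; norm_num
  have hNZfun : ∀ w : ℂ, ∀ j : Fin m, NZ f ρ (Hopf f ρ) w j
      = WZ (Hopf f ρ) w j
        + 2 * (a : ℂ) * (((Real.exp (-2 * ρ w) : ℝ) : ℂ) * (starRingEnd ℂ) (WZ (Fc f) w j)) := by
    intro w j
    simp only [NZ]
    rw [ha w, hvu]
    ring
  -- the wirtZbar part
  have hA : WZb (NZ f ρ (Hopf f ρ)) z i
      = -(muF ρ z * (Hopf f ρ z i + 2 * dZ ρ z * WZ (Fc f) z i)
          + WZ (Fc f) z i * wirtZ (muF ρ) z)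
        + 2 * (a : ℂ) * (((Real.exp (-2 * ρ z) : ℝ) : ℂ)
            * ((starRingEnd ℂ) (Hopf f ρ z i)
              + 2 * (starRingEnd ℂ) (dZ ρ z) * (starRingEnd ℂ) (WZ (Fc f) z i))
          + (starRingEnd ℂ) (WZ (Fc f) z i)
            * (-2 * (starRingEnd ℂ) (dZ ρ z) * ((Real.exp (-2 * ρ z) : ℝ) : ℂ))) := by
    show wirtZbar (fun w => NZ f ρ (Hopf f ρ) w i) z = _
    rw [show (fun w => NZ f ρ (Hopf f ρ) w i)
        = fun w => WZ (Hopf f ρ) w i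
          + 2 * (a : ℂ) * (((Real.exp (-2 * ρ w) : ℝ) : ℂ) * (starRingEnd ℂ) (WZ (Fc f) w i))
        from funext fun w => hNZfun w i]
    have hd1 : DifferentiableAt ℝ (fun w => WZ (Hopf f ρ) w i) z :=
      (contDiff_wirtZ (cd_Hopf hf i)).differentiable (by simp) z
    have hd2 : DifferentiableAt ℝ
        (fun w => 2 * (a : ℂ)
          * (((Real.exp (-2 * ρ w) : ℝ) : ℂ) * (starRingEnd ℂ) (WZ (Fc f) w i))) z :=
      ((contDiff_const.mul ((cd_G hf).mul (cd_conj (cd_u hf i)))).differentiable (by simp) z)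
    rw [wirtZbar_add hd1 hd2]
    have e1 : wirtZbar (fun w => WZ (Hopf f ρ) w i) z
        = -(muF ρ z * (Hopf f ρ z i + 2 * dZ ρ z * WZ (Fc f) z i)
            + WZ (Fc f) z i * wirtZ (muF ρ) z) := by
      have hcomm : wirtZbar (fun w => WZ (Hopf f ρ) w i) z
          = wirtZ (fun w => WZb (Hopf f ρ) w i) z := wirt_comm (cd_Hopf hf i) z
      rw [hcomm, show (fun w => WZb (Hopf f ρ) w i)
          = fun w => -(muF ρ w * WZ (Fc f) w i) from funext fun w => by
        rw [WZb_Hopf hf]; ring]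
      rw [wirtZ_neg, wirtZ_mul ((cd_mu hf).differentiable (by simp) z)
        ((cd_u hf i).differentiable (by simp) z)]
      rw [show wirtZ (fun w => WZ (Fc f) w i) z = WZ (WZ (Fc f)) z i from rfl]
      rw [show WZ (WZ (Fc f)) z i = Hopf f ρ z i + 2 * dZ ρ z * WZ (Fc f) z i from by
        simp only [Hopf]; ring]
    have e2 : wirtZbar (fun w => 2 * (a : ℂ)
          * (((Real.exp (-2 * ρ w) : ℝ) : ℂ) * (starRingEnd ℂ) (WZ (Fc f) w i))) z
        = 2 * (a : ℂ) * (((Real.exp (-2 * ρ z) : ℝ) : ℂ)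
            * ((starRingEnd ℂ) (Hopf f ρ z i)
              + 2 * (starRingEnd ℂ) (dZ ρ z) * (starRingEnd ℂ) (WZ (Fc f) z i))
          + (starRingEnd ℂ) (WZ (Fc f) z i)
            * (-2 * (starRingEnd ℂ) (dZ ρ z) * ((Real.exp (-2 * ρ z) : ℝ) : ℂ))) := by
      rw [wirtZbar_const_mul (((cd_G hf).mul (cd_conj (cd_u hf i))).differentiable (by simp) z),
        wirtZbar_mul ((cd_G hf).differentiable (by simp) z)
          ((cd_conj (cd_u hf i)).differentiable (by simp) z),
        wirtZbar_conj, wirtZbar_G hf]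
      rw [show wirtZ (fun w => WZ (Fc f) w i) z = WZ (WZ (Fc f)) z i from rfl]
      rw [show WZ (WZ (Fc f)) z i = Hopf f ρ z i + 2 * dZ ρ z * WZ (Fc f) z i from by
        simp only [Hopf]; ring]
      rw [map_add, map_mul, map_mul, map_ofNat]
    rw [e1, e2]
  -- the pairing part
  have hB : pairC (NZ f ρ (Hopf f ρ) z) (conjV (Hopf f ρ z))
      = dZ ρ z * muF ρ z * ((Real.exp (2 * ρ z) : ℝ) : ℂ)
        + (1/2 : ℂ) * ((Real.exp (2 * ρ z) : ℝ) : ℂ) * wirtZ (muF ρ) z := by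
    have hsplit : pairC (NZ f ρ (Hopf f ρ) z) (conjV (Hopf f ρ z))
        = pairC (WZ (Hopf f ρ) z) (conjV (Hopf f ρ z))
          + 2 * (a : ℂ) * ((Real.exp (-2 * ρ z) : ℝ) : ℂ)
            * pairC (conjV (WZ (Fc f) z)) (conjV (Hopf f ρ z)) := by
      simp only [pairC, conjV, Finset.mul_sum, ← Finset.sum_add_distrib]
      refine Finset.sum_congr rfl fun j _ => ?_
      rw [hNZfun z j]
      ring
    have hzero : pairC (conjV (WZ (Fc f) z)) (conjV (Hopf f ρ z)) = 0 := by
      rw [pairC_conj, pairC_comm, P3 hf, map_zero]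
    have hmain : pairC (WZ (Hopf f ρ) z) (conjV (Hopf f ρ z))
        = dZ ρ z * muF ρ z * ((Real.exp (2 * ρ z) : ℝ) : ℂ)
          + (1/2 : ℂ) * ((Real.exp (2 * ρ z) : ℝ) : ℂ) * wirtZ (muF ρ) z := by
      have hHd : ∀ j, DifferentiableAt ℝ (fun w => Hopf f ρ w j) z := fun j =>
        (cd_Hopf hf j).differentiable (by simp) z
      have hcHd : ∀ j, DifferentiableAt ℝ (fun w => conjV (Hopf f ρ w) j) z := fun j =>
        (cd_conj (cd_Hopf hf j)).differentiable (by simp) z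
      have h0 : wirtZ (fun w => pairC (Hopf f ρ w) (conjV (Hopf f ρ w))) z
          = dZ ρ z * muF ρ z * ((Real.exp (2 * ρ z) : ℝ) : ℂ)
            + (1/2 : ℂ) * ((Real.exp (2 * ρ z) : ℝ) : ℂ) * wirtZ (muF ρ) z := by
        rw [show (fun w => pairC (Hopf f ρ w) (conjV (Hopf f ρ w)))
            = fun w => (1/2 : ℂ) * (muF ρ w * ((Real.exp (2 * ρ w) : ℝ) : ℂ)) from
          funext fun w => by rw [Gauss hf w]; ring]
        rw [wirtZ_const_mul (((cd_mu hf).mul (cd_E hf)).differentiable (by simp) z),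
          wirtZ_mul ((cd_mu hf).differentiable (by simp) z) ((cd_E hf).differentiable (by simp) z),
          wirtZ_E hf]
        ring
      rw [wirtZ_pairC hHd hcHd] at h0
      have hsec : pairC (Hopf f ρ z) (WZ (fun w => conjV (Hopf f ρ w)) z) = 0 := by
        have : pairC (Hopf f ρ z) (WZ (fun w => conjV (Hopf f ρ w)) z)
            = -(starRingEnd ℂ) (muF ρ z) * pairC (Hopf f ρ z) (WZb (Fc f) z) := by
          simp only [pairC, Finset.mul_sum]
          refine Finset.sum_congr rfl fun j _ => ?_
          rw [show WZ (fun w => conjV (Hopf f ρ w)) z j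
              = (starRingEnd ℂ) (WZb (Hopf f ρ) z j) from wirtZ_conj]
          rw [WZb_Hopf hf, map_mul, map_neg, ← hvu]
          ring
        rw [this, P4 hf]
        ring
      rw [hsec] at h0
      linear_combination h0
    rw [hsplit, hzero, hmain]
    ring
  simp only [NZb]
  rw [hA, hB]
  linear_combination (WZ (Fc f) z i * wirtZ (muF ρ) z
    + 2 * muF ρ z * dZ ρ z * WZ (Fc f) z i) * hGE


lemma NZ_NZb_Hopf_zero (hf : IsConfMinImm f ρ) (z : ℂ) (i : Fin m) :
    NZ f ρ (NZb f ρ (Hopf f ρ)) z i = 0 := by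
  have h : NZb f ρ (Hopf f ρ) = fun _ _ => (0 : ℂ) :=
    funext fun w => funext fun j => NZb_Hopf_zero hf w j
  rw [h]
  have h2 : WZ (fun (_ : ℂ) (_ : Fin m) => (0 : ℂ)) z i = 0 := wirtZ_const 0 z
  simp only [NZ, h2, pairC]
  simp

lemma LapPerp_Hopf (hf : IsConfMinImm f ρ) (a : ℝ)
    (ha : ∀ z, pairC (Hopf f ρ z) (Hopf f ρ z) = (a : ℂ)) (z : ℂ) (i : Fin m) :
    LapPerp f ρ (Hopf f ρ) z i
      = -4 * ((Real.exp (-2 * ρ z) : ℝ) : ℂ)^2 * pairC (Hopf f ρ z) (conjV (Hopf f ρ z))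
          * Hopf f ρ z i
        + 4 * (a : ℂ) * ((Real.exp (-2 * ρ z) : ℝ) : ℂ)^2
          * (starRingEnd ℂ) (Hopf f ρ z i) := by
  have hGE : ((Real.exp (-2 * ρ z) : ℝ) : ℂ) * ((Real.exp (2 * ρ z) : ℝ) : ℂ) = 1 := by
    rw [← Complex.ofReal_mul, ← Real.exp_add]; norm_num
  simp only [LapPerp]
  rw [NZb_NZ_Hopf hf a ha, NZ_NZb_Hopf_zero hf, Gauss hf]
  linear_combination (2 * ((Real.exp (-2 * ρ z) : ℝ) : ℂ) * muF ρ z * Hopf f ρ z i) * hGE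

lemma NZ_conjV {ψ : ℂ → Fin m → ℂ} (z : ℂ) (i : Fin m) :
    NZ f ρ (fun w j => (starRingEnd ℂ) (ψ w j)) z i = (starRingEnd ℂ) (NZb f ρ ψ z i) := by
  have e1 : WZ (fun w j => (starRingEnd ℂ) (ψ w j)) z i = (starRingEnd ℂ) (WZb ψ z i) :=
    wirtZ_conj
  have e2 : pairC (fun j => (starRingEnd ℂ) (ψ z j)) (Hopf f ρ z)
      = (starRingEnd ℂ) (pairC (ψ z) (conjV (Hopf f ρ z))) := by
    simp [pairC, conjV, map_sum, map_mul]
  simp only [NZ, NZb]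
  rw [e1]
  rw [show pairC ((fun w j => (starRingEnd ℂ) (ψ w j)) z) (Hopf f ρ z)
      = (starRingEnd ℂ) (pairC (ψ z) (conjV (Hopf f ρ z))) from e2]
  rw [hvu z i]
  simp only [map_add, map_mul, Complex.conj_ofReal, map_ofNat]

lemma NZb_conjV {ψ : ℂ → Fin m → ℂ} (z : ℂ) (i : Fin m) :
    NZb f ρ (fun w j => (starRingEnd ℂ) (ψ w j)) z i = (starRingEnd ℂ) (NZ f ρ ψ z i) := by
  have e1 : WZb (fun w j => (starRingEnd ℂ) (ψ w j)) z i = (starRingEnd ℂ) (WZ ψ z i) :=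
    wirtZbar_conj
  have e2 : pairC (fun j => (starRingEnd ℂ) (ψ z j)) (conjV (Hopf f ρ z))
      = (starRingEnd ℂ) (pairC (ψ z) (Hopf f ρ z)) := by
    simp [pairC, conjV, map_sum, map_mul]
  simp only [NZ, NZb]
  rw [e1]
  rw [show pairC ((fun w j => (starRingEnd ℂ) (ψ w j)) z) (conjV (Hopf f ρ z))
      = (starRingEnd ℂ) (pairC (ψ z) (Hopf f ρ z)) from e2]
  rw [show WZ (Fc f) z i = (starRingEnd ℂ) (WZb (Fc f) z i) from by
    rw [hvu z i, Complex.conj_conj]]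
  simp only [map_add, map_mul, Complex.conj_ofReal, map_ofNat]

lemma LapPerp_conjV {ψ : ℂ → Fin m → ℂ} (z : ℂ) (i : Fin m) :
    LapPerp f ρ (fun w j => (starRingEnd ℂ) (ψ w j)) z i
      = (starRingEnd ℂ) (LapPerp f ρ ψ z i) := by
  simp only [LapPerp]
  have h1 : NZ f ρ (fun w j => (starRingEnd ℂ) (ψ w j))
      = fun w j => (starRingEnd ℂ) (NZb f ρ ψ w j) :=
    funext fun w => funext fun j => NZ_conjV w j
  have h2 : NZb f ρ (fun w j => (starRingEnd ℂ) (ψ w j))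
      = fun w j => (starRingEnd ℂ) (NZ f ρ ψ w j) :=
    funext fun w => funext fun j => NZb_conjV w j
  rw [h1, h2, NZb_conjV z i, NZ_conjV z i]
  simp only [map_add, map_mul, Complex.conj_ofReal, map_ofNat]
  ring

lemma NZ_lincomb (c d : ℂ) {ψ φ : ℂ → Fin m → ℂ} {z : ℂ}
    (hψ : ∀ j, DifferentiableAt ℝ (fun w => ψ w j) z)
    (hφ : ∀ j, DifferentiableAt ℝ (fun w => φ w j) z) (i : Fin m) :
    NZ f ρ (fun w j => c * ψ w j + d * φ w j) z i
      = c * NZ f ρ ψ z i + d * NZ f ρ φ z i := by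
  simp only [NZ]
  have e1 : WZ (fun w j => c * ψ w j + d * φ w j) z i = c * WZ ψ z i + d * WZ φ z i := by
    show wirtZ (fun w => c * ψ w i + d * φ w i) z = _
    rw [wirtZ_add ((hψ i).const_mul c) ((hφ i).const_mul d),
      wirtZ_const_mul (hψ i) c, wirtZ_const_mul (hφ i) d]
    rfl
  have e2 : pairC (fun j => c * ψ z j + d * φ z j) (Hopf f ρ z)
      = c * pairC (ψ z) (Hopf f ρ z) + d * pairC (φ z) (Hopf f ρ z) := by
    simp only [pairC, Finset.mul_sum, ← Finset.sum_add_distrib]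
    exact Finset.sum_congr rfl fun j _ => by ring
  rw [e1, show pairC ((fun w j => c * ψ w j + d * φ w j) z) (Hopf f ρ z)
    = c * pairC (ψ z) (Hopf f ρ z) + d * pairC (φ z) (Hopf f ρ z) from e2]
  ring

lemma NZb_lincomb (c d : ℂ) {ψ φ : ℂ → Fin m → ℂ} {z : ℂ}
    (hψ : ∀ j, DifferentiableAt ℝ (fun w => ψ w j) z)
    (hφ : ∀ j, DifferentiableAt ℝ (fun w => φ w j) z) (i : Fin m) :
    NZb f ρ (fun w j => c * ψ w j + d * φ w j) z i
      = c * NZb f ρ ψ z i + d * NZb f ρ φ z i := by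
  simp only [NZb]
  have e1 : WZb (fun w j => c * ψ w j + d * φ w j) z i = c * WZb ψ z i + d * WZb φ z i := by
    show wirtZbar (fun w => c * ψ w i + d * φ w i) z = _
    rw [wirtZbar_add ((hψ i).const_mul c) ((hφ i).const_mul d),
      wirtZbar_const_mul (hψ i) c, wirtZbar_const_mul (hφ i) d]
    rfl
  have e2 : pairC (fun j => c * ψ z j + d * φ z j) (conjV (Hopf f ρ z))
      = c * pairC (ψ z) (conjV (Hopf f ρ z)) + d * pairC (φ z) (conjV (Hopf f ρ z)) := by
    simp only [pairC, Finset.mul_sum, ← Finset.sum_add_distrib]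
    exact Finset.sum_congr rfl fun j _ => by ring
  rw [e1, show pairC ((fun w j => c * ψ w j + d * φ w j) z) (conjV (Hopf f ρ z))
    = c * pairC (ψ z) (conjV (Hopf f ρ z)) + d * pairC (φ z) (conjV (Hopf f ρ z)) from e2]
  ring

lemma LapPerp_lincomb (hf : IsConfMinImm f ρ) (c d : ℂ) {ψ φ : ℂ → Fin m → ℂ}
    (hψ : ∀ j, ContDiff ℝ (⊤ : ℕ∞) (fun w => ψ w j)) (hφ : ∀ j, ContDiff ℝ (⊤ : ℕ∞) (fun w => φ w j))
    (z : ℂ) (i : Fin m) :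
    LapPerp f ρ (fun w j => c * ψ w j + d * φ w j) z i
      = c * LapPerp f ρ ψ z i + d * LapPerp f ρ φ z i := by
  simp only [LapPerp]
  have h1 : NZ f ρ (fun w j => c * ψ w j + d * φ w j)
      = fun w j => c * NZ f ρ ψ w j + d * NZ f ρ φ w j :=
    funext fun w => funext fun j => NZ_lincomb c d
      (fun j' => (hψ j').differentiable (by simp) w) (fun j' => (hφ j').differentiable (by simp) w) j
  have h2 : NZb f ρ (fun w j => c * ψ w j + d * φ w j)
      = fun w j => c * NZb f ρ ψ w j + d * NZb f ρ φ w j :=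
    funext fun w => funext fun j => NZb_lincomb c d
      (fun j' => (hψ j').differentiable (by simp) w) (fun j' => (hφ j').differentiable (by simp) w) j
  rw [h1, h2,
    NZb_lincomb c d (fun j' => (cd_NZ hf hψ j').differentiable (by simp) z)
      (fun j' => (cd_NZ hf hφ j').differentiable (by simp) z) i,
    NZ_lincomb c d (fun j' => (cd_NZb hf hψ j').differentiable (by simp) z)
      (fun j' => (cd_NZb hf hφ j').differentiable (by simp) z) i]
  ring

end Main


/-- real and imaginary parts of the Simons identity (equation (3.2)). -/
theorem simons_identity_real_imaginary (n : ℕ) (hn : 3 ≤ n)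
    (f : ℂ → Fin (n + 1) → ℝ) (ρ : ℂ → ℝ) (hf : IsConfMinImm f ρ)
    (a : ℝ) (ha : ∀ z : ℂ, pairC (Hopf f ρ z) (Hopf f ρ z) = (a : ℂ)) :
    ∀ z : ℂ,
      pairC (HopfRe f ρ z) (HopfIm f ρ z) = 0 ∧
      pairC (HopfRe f ρ z) (HopfRe f ρ z) - pairC (HopfIm f ρ z) (HopfIm f ρ z) = (a : ℂ) ∧
      (∀ i, LapPerp f ρ (HopfRe f ρ) z i =
        -8 * (Real.exp (-4 * ρ z) : ℂ) * pairC (HopfIm f ρ z) (HopfIm f ρ z)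
          * HopfRe f ρ z i) ∧
      (∀ i, LapPerp f ρ (HopfIm f ρ) z i =
        -8 * (Real.exp (-4 * ρ z) : ℂ) * pairC (HopfRe f ρ z) (HopfRe f ρ z)
          * HopfIm f ρ z i) := by
  intro z
  set pr : ℝ := ∑ j, (Hopf f ρ z j).re * (Hopf f ρ z j).re with hpr
  set pi2 : ℝ := ∑ j, (Hopf f ρ z j).im * (Hopf f ρ z j).im with hpi2
  set pm : ℝ := ∑ j, (Hopf f ρ z j).re * (Hopf f ρ z j).im with hpm
  have kRR : pairC (HopfRe f ρ z) (HopfRe f ρ z) = ((pr : ℝ) : ℂ) := by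
    simp only [pairC, HopfRe, hpr]; push_cast; rfl
  have kII : pairC (HopfIm f ρ z) (HopfIm f ρ z) = ((pi2 : ℝ) : ℂ) := by
    simp only [pairC, HopfIm, hpi2]; push_cast; rfl
  have kRI : pairC (HopfRe f ρ z) (HopfIm f ρ z) = ((pm : ℝ) : ℂ) := by
    simp only [pairC, HopfRe, HopfIm, hpm]; push_cast; rfl
  have kS : pairC (Hopf f ρ z) (conjV (Hopf f ρ z)) = ((pr + pi2 : ℝ) : ℂ) := by
    simp only [pairC, conjV, Complex.mul_conj, hpr, hpi2]
    push_cast [Complex.normSq_apply]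
    rw [← Finset.sum_add_distrib]
  have hterm : ∀ w : ℂ, w * w
      = (((w.re * w.re - w.im * w.im : ℝ)) : ℂ) + (((2 * (w.re * w.im) : ℝ)) : ℂ) * Complex.I := by
    intro w
    apply Complex.ext <;>
      simp [Complex.mul_re, Complex.mul_im] <;> ring
  have kHH : pairC (Hopf f ρ z) (Hopf f ρ z)
      = ((pr - pi2 : ℝ) : ℂ) + ((2 * pm : ℝ) : ℂ) * Complex.I := by
    have : pairC (Hopf f ρ z) (Hopf f ρ z)
        = ∑ j, ((((Hopf f ρ z j).re * (Hopf f ρ z j).re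
            - (Hopf f ρ z j).im * (Hopf f ρ z j).im : ℝ)) : ℂ)
          + (∑ j, (((2 * ((Hopf f ρ z j).re * (Hopf f ρ z j).im) : ℝ)) : ℂ)) * Complex.I := by
      rw [pairC, Finset.sum_mul, ← Finset.sum_add_distrib]
      exact Finset.sum_congr rfl fun j _ => hterm (Hopf f ρ z j)
    rw [this, hpr, hpi2, hpm]
    push_cast
    rw [Finset.sum_sub_distrib, Finset.mul_sum]
  have hee := ha z
  rw [kHH] at hee
  have hpm0 : pm = 0 := by
    have him := congrArg Complex.im hee
    simp at him
    linarith
  have hre : pr - pi2 = a := by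
    have hre' := congrArg Complex.re hee
    simpa using hre'
  refine ⟨by rw [kRI, hpm0]; norm_num, by rw [kRR, kII]; exact_mod_cast hre, ?_, ?_⟩
  · -- real part Laplacian
    intro i
    have hRe_fun : HopfRe f ρ = fun w j => (1/2 : ℂ) * Hopf f ρ w j
        + (1/2 : ℂ) * (starRingEnd ℂ) (Hopf f ρ w j) := by
      funext w j
      have h := Complex.add_conj (Hopf f ρ w j)
      push_cast at h
      simp only [HopfRe]
      linear_combination (-1/2 : ℂ) * h
    have step : LapPerp f ρ (HopfRe f ρ) z i
        = (1/2 : ℂ) * LapPerp f ρ (Hopf f ρ) z i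
          + (1/2 : ℂ) * (starRingEnd ℂ) (LapPerp f ρ (Hopf f ρ) z i) := by
      rw [hRe_fun, LapPerp_lincomb hf (1/2) (1/2) (fun j => cd_Hopf hf j)
        (fun j => cd_conj (cd_Hopf hf j)) z i, LapPerp_conjV z i]
    have hconjL : (starRingEnd ℂ) (LapPerp f ρ (Hopf f ρ) z i)
        = -4 * ((Real.exp (-2 * ρ z) : ℝ) : ℂ)^2 * ((pr + pi2 : ℝ) : ℂ)
            * (starRingEnd ℂ) (Hopf f ρ z i)
          + 4 * (a : ℂ) * ((Real.exp (-2 * ρ z) : ℝ) : ℂ)^2 * Hopf f ρ z i := by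
      rw [LapPerp_Hopf hf a ha z i, kS]
      simp only [map_add, map_mul, map_neg, map_ofNat, map_pow, Complex.conj_ofReal,
        Complex.conj_conj]
    have hG4 : ((Real.exp (-4 * ρ z) : ℝ) : ℂ) = ((Real.exp (-2 * ρ z) : ℝ) : ℂ)^2 := by
      have h4 : Real.exp (-4 * ρ z) = Real.exp (-2 * ρ z) * Real.exp (-2 * ρ z) := by
        rw [← Real.exp_add]; congr 1; ring
      rw [h4]; push_cast; ring
    have hadd : Hopf f ρ z i + (starRingEnd ℂ) (Hopf f ρ z i)
        = 2 * (((Hopf f ρ z i).re : ℝ) : ℂ) := by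
      have h := Complex.add_conj (Hopf f ρ z i); push_cast at h; exact h
    have ha' : (a : ℂ) = ((pr : ℝ) : ℂ) - ((pi2 : ℝ) : ℂ) := by
      exact_mod_cast congrArg (fun t : ℝ => (t : ℂ)) hre.symm
    rw [step, hconjL, LapPerp_Hopf hf a ha z i, kS, kII,
      show HopfRe f ρ z i = (((Hopf f ρ z i).re : ℝ) : ℂ) from rfl, hG4, ha']
    push_cast
    linear_combination (-4 * (Complex.exp (-2 * ((ρ z : ℝ) : ℂ)))^2 * ((pi2 : ℝ) : ℂ)) * hadd
  · -- imaginary part Laplacian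
    intro i
    have hIm_fun : HopfIm f ρ = fun w j => (-(Complex.I)/2) * Hopf f ρ w j
        + (Complex.I/2) * (starRingEnd ℂ) (Hopf f ρ w j) := by
      funext w j
      have h := Complex.sub_conj (Hopf f ρ w j)
      push_cast at h
      simp only [HopfIm]
      linear_combination (Complex.I/2 : ℂ) * h
        + (((Hopf f ρ w j).im : ℝ) : ℂ) * Complex.I_sq
    have step : LapPerp f ρ (HopfIm f ρ) z i
        = (-(Complex.I)/2) * LapPerp f ρ (Hopf f ρ) z i
          + (Complex.I/2) * (starRingEnd ℂ) (LapPerp f ρ (Hopf f ρ) z i) := by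
      rw [hIm_fun, LapPerp_lincomb hf (-(Complex.I)/2) (Complex.I/2) (fun j => cd_Hopf hf j)
        (fun j => cd_conj (cd_Hopf hf j)) z i, LapPerp_conjV z i]
    have hconjL : (starRingEnd ℂ) (LapPerp f ρ (Hopf f ρ) z i)
        = -4 * ((Real.exp (-2 * ρ z) : ℝ) : ℂ)^2 * ((pr + pi2 : ℝ) : ℂ)
            * (starRingEnd ℂ) (Hopf f ρ z i)
          + 4 * (a : ℂ) * ((Real.exp (-2 * ρ z) : ℝ) : ℂ)^2 * Hopf f ρ z i := by
      rw [LapPerp_Hopf hf a ha z i, kS]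
      simp only [map_add, map_mul, map_neg, map_ofNat, map_pow, Complex.conj_ofReal,
        Complex.conj_conj]
    have hG4 : ((Real.exp (-4 * ρ z) : ℝ) : ℂ) = ((Real.exp (-2 * ρ z) : ℝ) : ℂ)^2 := by
      have h4 : Real.exp (-4 * ρ z) = Real.exp (-2 * ρ z) * Real.exp (-2 * ρ z) := by
        rw [← Real.exp_add]; congr 1; ring
      rw [h4]; push_cast; ring
    have hsub : Hopf f ρ z i - (starRingEnd ℂ) (Hopf f ρ z i)
        = 2 * (((Hopf f ρ z i).im : ℝ) : ℂ) * Complex.I := by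
      have h := Complex.sub_conj (Hopf f ρ z i); push_cast at h
      linear_combination h
    have ha' : (a : ℂ) = ((pr : ℝ) : ℂ) - ((pi2 : ℝ) : ℂ) := by
      exact_mod_cast congrArg (fun t : ℝ => (t : ℂ)) hre.symm
    rw [step, hconjL, LapPerp_Hopf hf a ha z i, kS, kRR,
      show HopfIm f ρ z i = (((Hopf f ρ z i).im : ℝ) : ℂ) from rfl, hG4, ha']
    push_cast
    linear_combination (4 * (Complex.exp (-2 * ((ρ z : ℝ) : ℂ)))^2 * ((pr : ℝ) : ℂ) * Complex.I)
        * hsub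
      + (8 * (Complex.exp (-2 * ((ρ z : ℝ) : ℂ)))^2 * ((pr : ℝ) : ℂ)
          * (((Hopf f ρ z i).im : ℝ) : ℂ)) * Complex.I_sq
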